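/- Let π be a finitely generated group that contains a finite-index subgroup which is RFRS. Then for every element g ∈ π of infinite order, the cyclic subgroup ⟨g⟩ generated by g is separable in π. -/

import Mathlib

/-!
Some power `z = gⁿ` lies in `K`, and `z ≠ 1`. Going down the RFRS chain of `K`, `z` eventually
lies in a finite-index subgroup `H` in which it survives in `H₁(H; ℤ)/torsion`, so some
`φ : H → ℤ` has `φ z ≠ 0`. In the residually finite group `H` this makes `⟨z⟩` separable: an
`h ∉ ⟨z⟩` either has `φ h ∉ φ⟨z⟩`, or `φ h = φ(zˡ)` and `z⁻ˡ h ≠ 1` lies outside some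
finite-index normal `N`; then `⟨z⟩ · (N ∩ φ⁻¹⟨φ(z)^[H : N]⟩)` is a finite-index subgroup
containing `z` but not `h`. Separability then passes up the finite-index inclusions
`H ≤ K ≤ π`, and from `⟨gⁿ⟩` to `⟨g⟩`, a finite union of cosets of `⟨gⁿ⟩`.
-/

/-- A group `π` is RFRS (residually finite rationally solvable) if there is a descending
chain `π = π₀ ⊇ π₁ ⊇ ⋯` of normal finite-index subgroups with trivial intersection such
that for every `i`, every element of `πᵢ` whose image in the abelianization of `πᵢ` has
finite order lies in `πᵢ₊₁`. -/
def IsRFRS (π : Type) [Group π] : Prop :=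
  ∃ c : ℕ → Subgroup π,
    c 0 = ⊤ ∧ (∀ i, c (i + 1) ≤ c i) ∧ (∀ i, (c i).Normal) ∧ (∀ i, (c i).FiniteIndex) ∧
    (⨅ i, c i) = ⊥ ∧
    ∀ (i : ℕ) (x : ↥(c i)), IsOfFinOrder (Abelianization.of x) → (x : π) ∈ c (i + 1)

/-- A subgroup `S` of a group `G` is separable if for every `g ∈ G` with `g ∉ S` there
is a homomorphism `φ` from `G` to a finite group with `φ g ∉ φ(S)`. -/
def IsSeparableSubgroup {G : Type} [Group G] (S : Subgroup G) : Prop :=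
  ∀ g : G, g ∉ S → ∃ (Q : Type) (_ : Group Q) (_ : Finite Q) (φ : G →* Q),
    φ g ∉ S.map φ

open Subgroup

instance Subgroup.finiteIndex_comap {G H : Type*} [Group G] [Group H] (f : G →* H)
    (K : Subgroup H) [K.FiniteIndex] : (K.comap f).FiniteIndex :=
  ⟨by rw [index_comap]; exact (isFiniteRelIndex_of_finiteIndex (H := K)).relIndex_ne_zero⟩

theorem Int.finiteIndex_zpowers {a : Multiplicative ℤ} (ha : a ≠ 1) :
    (zpowers a).FiniteIndex := by
  have : zpowers a = (AddSubgroup.zmultiples a.toAdd).toSubgroup := by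
    ext x
    simp only [mem_zpowers_iff]
    exact exists_congr fun k => by
      rw [← Multiplicative.toAdd.injective.eq_iff, toAdd_zpow, mul_comm]; rfl
  rw [finiteIndex_iff, this, AddSubgroup.index_toSubgroup, Int.index_zmultiples]
  simpa using ha

theorem isSeparableSubgroup_iff_exists_finiteIndex {G : Type} [Group G] {S : Subgroup G} :
    IsSeparableSubgroup S ↔ ∀ g ∉ S, ∃ L : Subgroup G, L.FiniteIndex ∧ S ≤ L ∧ g ∉ L := by
  constructor
  · intro hS g hg
    obtain ⟨Q, _, _, φ, hφ⟩ := hS g hg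
    exact ⟨(S.map φ).comap φ, inferInstance, le_comap_map φ S, hφ⟩
  · intro hS g hg
    obtain ⟨L, hL, hSL, hgL⟩ := hS g hg
    refine ⟨G ⧸ L.normalCore, inferInstance, inferInstance, QuotientGroup.mk' L.normalCore, ?_⟩
    rintro ⟨s, hs, hsg⟩
    have hsg' : s⁻¹ * g ∈ L := L.normalCore_le (QuotientGroup.eq.mp hsg)
    exact hgL (by simpa using L.mul_mem (hSL hs) hsg')

theorem IsSeparableSubgroup.map_subtype {G : Type} [Group G] {H : Subgroup G} [H.FiniteIndex]
    {S : Subgroup H} (hS : IsSeparableSubgroup S) : IsSeparableSubgroup (S.map H.subtype) := by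
  rw [isSeparableSubgroup_iff_exists_finiteIndex] at hS ⊢
  intro g hg
  by_cases hgH : g ∈ H
  · obtain ⟨L, hL, hSL, hgL⟩ := hS ⟨g, hgH⟩ fun h => hg ⟨_, h, rfl⟩
    refine ⟨L.map H.subtype, ⟨?_⟩, map_mono hSL, ?_⟩
    · rw [index_map_subtype]
      exact mul_ne_zero hL.index_ne_zero FiniteIndex.index_ne_zero
    · rintro ⟨x, hx, hxg⟩
      exact hgL ((Subtype.ext hxg : x = ⟨g, hgH⟩) ▸ hx)
  · exact ⟨H, inferInstance, map_subtype_le S, hgH⟩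

theorem IsSeparableSubgroup.of_le {G : Type} [Group G] {S T : Subgroup G} (hST : S ≤ T)
    [S.IsFiniteRelIndex T] (hS : IsSeparableSubgroup S) : IsSeparableSubgroup T := by
  rw [isSeparableSubgroup_iff_exists_finiteIndex] at hS ⊢
  intro x hx
  have hrep (q : T ⧸ S.subgroupOf T) : ((q.out : T) : G)⁻¹ * x ∉ S := fun h =>
    hx (by simpa using T.mul_mem q.out.2 (hST h))
  choose L hL hSL hxL using fun q => hS _ (hrep q)
  have := finiteIndex_iInf hL
  set N := (⨅ q, L q).normalCore
  refine ⟨T ⊔ N, finiteIndex_of_le le_sup_right, le_sup_left, fun hxTN => ?_⟩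
  obtain ⟨t, ht, n, hn, rfl⟩ := mem_sup_of_normal_right.mp hxTN
  set q : T ⧸ S.subgroupOf T := ((⟨t, ht⟩ : T) : T ⧸ S.subgroupOf T)
  obtain ⟨s, hs⟩ := QuotientGroup.mk_out_eq_mul (S.subgroupOf T) ⟨t, ht⟩
  apply hxL q
  have hq : ((q.out : T) : G) = t * s := congrArg Subtype.val hs
  have hnL : n ∈ L q := iInf_le L q (normalCore_le _ hn)
  rw [hq, mul_inv_rev, mul_assoc, inv_mul_cancel_left]
  exact (L q).mul_mem (hSL q (inv_mem s.2)) hnL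

theorem Subgroup.isFiniteRelIndex_zpowers_pow {G : Type*} [Group G] (g : G) {n : ℕ}
    (hn : n ≠ 0) : (zpowers (g ^ n)).IsFiniteRelIndex (zpowers g) := by
  rw [isFiniteRelIndex_iff_finiteIndex]
  suffices Finite (zpowers g ⧸ (zpowers (g ^ n)).subgroupOf (zpowers g)) from
    finiteIndex_of_finite_quotient
  refine Finite.of_surjective
    (fun j : Fin n => (⟨g ^ (j : ℕ), npow_mem_zpowers g j⟩ : zpowers g)) ?_
  refine fun q => QuotientGroup.induction_on q fun ⟨t, ht⟩ => ?_
  obtain ⟨k, rfl⟩ := mem_zpowers_iff.mp ht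
  have hn' : (0 : ℤ) < n := by omega
  have hk : ((k % n).toNat : ℤ) = k % n := Int.toNat_of_nonneg (Int.emod_nonneg _ hn'.ne')
  refine ⟨⟨(k % n).toNat, by have := Int.emod_lt_of_pos k hn'; omega⟩, ?_⟩
  rw [QuotientGroup.eq, mem_subgroupOf]
  simp only [coe_mul, coe_inv]
  rw [← zpow_natCast g (k % n).toNat, hk, ← zpow_neg, ← zpow_add, mem_zpowers_iff]
  refine ⟨k / n, ?_⟩
  rw [← zpow_natCast, ← zpow_mul]
  congr 1
  linarith [Int.mul_ediv_add_emod k n]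

theorem AddCommGroup.exists_addMonoidHom_int_ne_zero {A : Type*} [AddCommGroup A] [AddGroup.FG A]
    {a : A} (ha : ¬ IsOfFinAddOrder a) : ∃ f : A →+ ℤ, f a ≠ 0 := by
  have : Module.Finite ℤ A := Module.Finite.iff_addGroup_fg.mpr ‹_›
  let T := Submodule.torsion ℤ A
  have ha' : T.mkQ a ≠ 0 := by
    rwa [Submodule.mkQ_apply, Ne, Submodule.Quotient.mk_eq_zero, ← Submodule.mem_toAddSubgroup,
      Submodule.torsion_int, AddCommGroup.mem_torsion]
  obtain ⟨f, hf⟩ := Module.Projective.exists_dual_ne_zero ℤ ha'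
  exact ⟨(f ∘ₗ T.mkQ).toAddMonoidHom, hf⟩

theorem exists_monoidHom_int_ne_one {H : Type*} [Group H] [Group.FG H] {x : H}
    (hx : ¬ IsOfFinOrder (Abelianization.of x)) : ∃ φ : H →* Multiplicative ℤ, φ x ≠ 1 := by
  have : Group.FG (Abelianization H) :=
    Group.fg_of_surjective (f := Abelianization.of) (QuotientGroup.mk_surjective)
  obtain ⟨f, hf⟩ := AddCommGroup.exists_addMonoidHom_int_ne_zero
    (a := Additive.ofMul (Abelianization.of x)) (by rwa [isOfFinAddOrder_ofMul_iff])
  exact ⟨(AddMonoidHom.toMultiplicativeRight f).comp Abelianization.of, hf⟩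

theorem exists_zpow_of_mem_zpowers_sup {G : Type*} [Group G] (φ : G →* Multiplicative ℤ) (z : G)
    (N : Subgroup G) [N.Normal] {h : G}
    (hh : h ∈ zpowers z ⊔ (N ⊓ (zpowers (φ z ^ N.index)).comap φ)) :
    ∃ l : ℤ, φ h = φ z ^ l ∧ z ^ (-l) * h ∈ N := by
  obtain ⟨_, ⟨l, rfl⟩, n, ⟨hnN, hnφ⟩, rfl⟩ := mem_sup_of_normal_right.mp hh
  obtain ⟨t, ht⟩ := mem_zpowers_iff.mp (mem_comap.mp hnφ)
  refine ⟨l + N.index * t, ?_, ?_⟩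
  · simp only [map_mul, map_zpow, ← ht, ← zpow_natCast, ← zpow_mul, zpow_add]
  · have hzN : z ^ N.index ∈ N := N.pow_index_mem z
    have : z ^ (-(l + N.index * t)) * (z ^ l * n) = (z ^ N.index) ^ (-t) * n := by group
    rw [this]
    exact N.mul_mem (N.zpow_mem hzN _) hnN

theorem isSeparableSubgroup_zpowers_of_monoidHom_int {G : Type} [Group G]
    [Group.ResiduallyFinite G] (φ : G →* Multiplicative ℤ) {z : G} (hz : φ z ≠ 1) :
    IsSeparableSubgroup (zpowers z) := by
  rw [isSeparableSubgroup_iff_exists_finiteIndex]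
  intro h hh
  have hfin (N : Subgroup G) [N.FiniteIndex] :
      (zpowers z ⊔ (N ⊓ (zpowers (φ z ^ N.index)).comap φ)).FiniteIndex := by
    have : (zpowers (φ z ^ N.index)).FiniteIndex := Int.finiteIndex_zpowers
      ((pow_eq_one_iff_right hz).not.mpr (FiniteIndex.index_ne_zero (H := N)))
    exact finiteIndex_of_le le_sup_right
  by_cases hφh : ∃ l : ℤ, φ h = φ z ^ l
  · obtain ⟨l₀, hl₀⟩ := hφh
    have : z ^ (-l₀) * h ≠ 1 := fun h1 =>
      hh ⟨l₀, by rw [← inv_mul_eq_one, ← zpow_neg, h1]⟩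
    obtain ⟨N, hN⟩ := Group.exists_finiteIndexNormalSubgroup_notMem _ this
    refine ⟨_, hfin N, le_sup_left, fun hmem => hN ?_⟩
    obtain ⟨l, hl, hlN⟩ := exists_zpow_of_mem_zpowers_sup φ z N hmem
    have : l = l₀ := injective_zpow_iff_not_isOfFinOrder.mpr
      (not_isOfFinOrder_of_isMulTorsionFree hz) (hl.symm.trans hl₀)
    rwa [← this]
  · refine ⟨_, hfin ⊤, le_sup_left, fun hmem => hφh ?_⟩
    exact (exists_zpow_of_mem_zpowers_sup φ z ⊤ hmem).imp fun _ => And.left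

namespace IsRFRS

variable {G : Type} [Group G]

theorem residuallyFinite (hG : IsRFRS G) : Group.ResiduallyFinite G := by
  obtain ⟨c, -, -, -, hfin, hinf, -⟩ := hG
  refine Group.residuallyFinite_iff_exists_finiteIndex.mpr fun x hx => ?_
  have : x ∉ ⨅ i, c i := by rwa [hinf, mem_bot]
  obtain ⟨i, hi⟩ := not_forall.mp (mt mem_iInf.mpr this)
  exact ⟨c i, hfin i, hi⟩

theorem exists_finiteIndex_not_isOfFinOrder (hG : IsRFRS G) {x : G} (hx : x ≠ 1) :
    ∃ (H : Subgroup G) (hxH : x ∈ H),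
      H.FiniteIndex ∧ ¬ IsOfFinOrder (Abelianization.of (⟨x, hxH⟩ : H)) := by
  obtain ⟨c, hc0, -, -, hfin, hinf, hstep⟩ := hG
  by_contra! hcon
  have hmem (i : ℕ) : x ∈ c i := by
    induction i with
    | zero => exact hc0 ▸ mem_top x
    | succ i ih => exact hstep i ⟨x, ih⟩ (hcon _ ih (hfin i))
  exact hx (by simpa [hinf] using mem_iInf.mpr hmem)

end IsRFRS

/-- If a finitely generated group `π` has a finite-index RFRS subgroup, then for every
element `g ∈ π` of infinite order the cyclic subgroup `⟨g⟩` is separable in `π`. -/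
theorem cyclic_subgroup_separable_of_virtually_rfrs
    {π : Type} [Group π] [Group.FG π]
    (K : Subgroup π) (hK : K.FiniteIndex) (hrfrs : IsRFRS ↥K)
    (g : π) (hg : ¬ IsOfFinOrder g) :
    IsSeparableSubgroup (Subgroup.zpowers g) := by
  obtain ⟨n, hn, -, hgn⟩ := K.exists_pow_mem_of_index_ne_zero hK.index_ne_zero g
  have hgn1 : (⟨g ^ n, hgn⟩ : K) ≠ 1 := fun h1 =>
    hg (isOfFinOrder_iff_pow_eq_one.mpr ⟨n, hn, congrArg Subtype.val h1⟩)
  obtain ⟨H, hgnH, hH, hab⟩ := hrfrs.exists_finiteIndex_not_isOfFinOrder hgn1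
  have : Group.FG K := fg_of_index_ne_zero K
  have : Group.FG H := fg_of_index_ne_zero H
  have := hrfrs.residuallyFinite
  obtain ⟨φ, hφ⟩ := exists_monoidHom_int_ne_one hab
  have hsep := (isSeparableSubgroup_zpowers_of_monoidHom_int φ hφ).map_subtype.map_subtype
  rw [MonoidHom.map_zpowers, MonoidHom.map_zpowers] at hsep
  have := isFiniteRelIndex_zpowers_pow g hn.ne'
  exact hsep.of_le (zpowers_le.mpr (pow_mem (mem_zpowers g) n))
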